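/- Let A be the 2k×2k block matrix over ℤ given by ((I_k + R_k + T_k, I_k), (S_k, I_k)). Then det(A) = 2k + 1. -/

import Mathlib

open Matrix

def Rmat (k : ℕ) : Matrix (Fin k) (Fin k) ℤ :=
  Matrix.of fun i _ => if (i : ℕ) = 0 then 1 else 0

def Smat (k : ℕ) : Matrix (Fin k) (Fin k) ℤ :=
  Matrix.of fun i j => if (i : ℕ) = (j : ℕ) + 1 then 1 else 0

def Tmat (k : ℕ) : Matrix (Fin k) (Fin k) ℤ :=
  Matrix.of fun i j => if (i : ℕ) = k - 1 ∧ (j : ℕ) = k - 1 then 1 else 0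

/-!
By the Schur complement of the lower right identity block, `det A = det (I + R + T - S)`.
With `J` the all-ones matrix, `(I - S) J = R` and `S T = 0`, so
`I + R + T - S = (I - S) (I + J + T)`, and `I - S` is unitriangular. Finally
`J + T = 𝟙𝟙ᵀ + eeᵀ` with `e` the last basis vector, so by Weinstein–Aronszajn
`det (I + J + T) = det [[1 + k, 1], [1, 2]] = 2k + 1`.
-/

namespace Matrix

variable {n R : Type*} [CommRing R]

theorem of_transpose_mul_of_fin_two (v w : n → R) :
    (of ![v, w])ᵀ * of ![v, w] = vecMulVec v v + vecMulVec w w := by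
  ext i j
  simp [mul_apply, Fin.sum_univ_two, vecMulVec_apply]

variable [Fintype n]

theorem of_mul_of_transpose_fin_two (v w : n → R) :
    of ![v, w] * (of ![v, w])ᵀ = !![v ⬝ᵥ v, v ⬝ᵥ w; w ⬝ᵥ v, w ⬝ᵥ w] := by
  ext i j
  fin_cases i <;> fin_cases j <;> rfl

theorem det_one_add_vecMulVec_add_vecMulVec [DecidableEq n] (v w : n → R) :
    det (1 + (vecMulVec v v + vecMulVec w w)) =
      (1 + v ⬝ᵥ v) * (1 + w ⬝ᵥ w) - (v ⬝ᵥ w) ^ 2 := by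
  rw [← of_transpose_mul_of_fin_two, det_one_add_mul_comm, of_mul_of_transpose_fin_two,
    one_fin_two, of_add_of]
  simp only [cons_add_cons, empty_add_empty]
  rw [det_fin_two_of, dotProduct_comm w v]
  ring

end Matrix

theorem Smat_mul_Tmat (k : ℕ) : Smat k * Tmat k = 0 := by
  ext i j
  simp only [mul_apply, Smat, Tmat, of_apply, Matrix.zero_apply]
  refine Finset.sum_eq_zero fun l _ => ?_
  have := i.isLt
  split_ifs <;> omega

theorem Smat_mulVec_one (k : ℕ) :
    Smat k *ᵥ 1 = fun i : Fin k => if (i : ℕ) = 0 then (0 : ℤ) else 1 := by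
  ext ⟨_ | m, hi⟩
  · simp [mulVec, dotProduct, Smat]
  · have hm : m < k := by omega
    have hl (l : Fin k) : m + 1 = (l : ℕ) + 1 ↔ l = ⟨m, hm⟩ := by simp [Fin.ext_iff, eq_comm]
    simp only [mulVec, dotProduct, Smat, of_apply, Pi.one_apply, mul_one, hl]
    simp

theorem one_sub_Smat_mul_vecMulVec_one (k : ℕ) :
    (1 - Smat k) * vecMulVec 1 1 = Rmat k := by
  rw [mul_vecMulVec, sub_mulVec, one_mulVec, Smat_mulVec_one]
  ext i j
  simp only [Rmat, vecMulVec_apply, of_apply, Pi.sub_apply, Pi.one_apply, mul_one]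
  split_ifs <;> norm_num

theorem det_one_sub_Smat (k : ℕ) : (1 - Smat k).det = 1 := by
  rw [det_of_isLowerTriangular]
  · refine Finset.prod_eq_one fun i _ => ?_
    simp [Smat]
  · intro i j (hij : i < j)
    have : (i : ℕ) < j := hij
    simp only [Smat, Matrix.sub_apply, one_apply, Fin.ext_iff, of_apply]
    omega

theorem Tmat_succ (n : ℕ) :
    Tmat (n + 1) = vecMulVec (Pi.single (Fin.last n) 1) (Pi.single (Fin.last n) 1) := by
  ext i j
  simp only [Tmat, of_apply, vecMulVec_apply, Pi.single_apply, Fin.ext_iff, Fin.val_last,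
    Nat.add_sub_cancel]
  split_ifs <;> simp_all

theorem one_add_Rmat_add_Tmat_sub_Smat (k : ℕ) :
    1 + Rmat k + Tmat k - Smat k = (1 - Smat k) * (1 + (vecMulVec 1 1 + Tmat k)) := by
  rw [Matrix.mul_add, Matrix.mul_add, Matrix.mul_one, one_sub_Smat_mul_vecMulVec_one,
    Matrix.sub_mul, Matrix.one_mul, Smat_mul_Tmat, sub_zero]
  abel

theorem det_A2k (k : ℕ) :
    (Matrix.fromBlocks (1 + Rmat k + Tmat k) 1 (Smat k) 1).det = 2 * k + 1 := by
  rw [det_fromBlocks_one₂₂, Matrix.one_mul, one_add_Rmat_add_Tmat_sub_Smat, det_mul,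
    det_one_sub_Smat, one_mul]
  cases k with
  | zero => simp
  | succ n =>
    rw [Tmat_succ, det_one_add_vecMulVec_add_vecMulVec]
    simp only [one_dotProduct_one, dotProduct_single, Pi.single_eq_same, Pi.one_apply,
      Fintype.card_fin]
    push_cast
    ring
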